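/- arXiv:2105.00185 — 3 statements merged into one kernel-verified Lean document; each statement's English description precedes it below -/
import Mathlib

section
/- If M is a binary matroid, C is a circuit of M, and e is an element of the ground set of M not in C, then either C is a circuit of the contraction M/e, or C is a disjoint union of two circuits of M/e; moreover, in both cases M/e has no other circuits contained in C. -/
open Set

namespace Matroid

variable {α : Type*}

/-- A circuit of a matroid: a minimal dependent set. -/
def Circuit (M : Matroid α) (C : Set α) : Prop :=
  M.Dep C ∧ ∀ ⦃D : Set α⦄, D ⊂ C → M.Indep D

/-- A cocircuit: a circuit of the dual matroid. -/
def Cocircuit (M : Matroid α) (C : Set α) : Prop :=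
  M✶.Circuit C

/-- Deletion of a set of elements. -/
def deleteSet (M : Matroid α) (D : Set α) : Matroid α := M ↾ (M.E \ D)

/-- Contraction of a set of elements. -/
def contractSet (M : Matroid α) (C : Set α) : Matroid α := (M✶.deleteSet C)✶

/-- A cycle of a matroid: a disjoint union of circuits. -/
def Cycle (M : Matroid α) (A : Set α) : Prop :=
  ∃ 𝒞 : Set (Set α), (∀ C ∈ 𝒞, M.Circuit C) ∧ 𝒞.PairwiseDisjoint id ∧ A = ⋃₀ 𝒞

/-- A matroid is connected if any two distinct elements of the ground set lie
on a common circuit. -/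
def Conn (M : Matroid α) : Prop :=
  ∀ ⦃e f : α⦄, e ∈ M.E → f ∈ M.E → e ≠ f → ∃ C, M.Circuit C ∧ e ∈ C ∧ f ∈ C

/-- A matroid is binary if it is representable over `F₂`. -/
def Binary (M : Matroid α) : Prop :=
  ∃ (m : ℕ) (φ : α → (Fin m → ZMod 2)),
    ∀ I : Set α, I ⊆ M.E → (M.Indep I ↔ LinearIndependent (ZMod 2) (fun x : I => φ x))

/-- A coloop: a loop of the dual matroid. -/
def IsColoop' (M : Matroid α) (e : α) : Prop := M✶.Circuit {e}

end Matroid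


namespace Matroid

variable {α : Type*} {M : Matroid α} {X I B C D K A : Set α} {e : α}

lemma exists_circuit_subset_aux (M : Matroid α) :
    ∀ n (X : Set α), X.Finite → X.ncard ≤ n → M.Dep X → ∃ K, K ⊆ X ∧ M.Circuit K := by
  intro n
  induction n with
  | zero =>
    intro X hfin hcard hdep
    have hX : X = ∅ := by rwa [Nat.le_zero, Set.ncard_eq_zero hfin] at hcard
    rw [hX] at hdep
    exact absurd M.empty_indep hdep.1
  | succ n ih =>
    intro X hfin hcard hdep
    by_cases h : ∀ ⦃D : Set α⦄, D ⊂ X → M.Indep D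
    · exact ⟨X, Subset.rfl, hdep, h⟩
    · push_neg at h
      obtain ⟨D, hDX, hDdep⟩ := h
      have hD : M.Dep D := ⟨hDdep, hDX.subset.trans hdep.2⟩
      have hlt : D.ncard < X.ncard := Set.ncard_lt_ncard hDX hfin
      obtain ⟨K, hKD, hK⟩ := ih D (hfin.subset hDX.subset) (by omega) hD
      exact ⟨K, hKD.trans hDX.subset, hK⟩

lemma dep_subset_circuit (hdep : M.Dep X) (hfin : X.Finite) : ∃ K, K ⊆ X ∧ M.Circuit K :=
  exists_circuit_subset_aux M X.ncard X hfin le_rfl hdep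

lemma contract_ground' (M : Matroid α) (X : Set α) : (M.contractSet X).E = M.E \ X := rfl

lemma contract_indep_iff' : (M.contractSet {e}).Indep I ↔
    I ⊆ M.E \ {e} ∧ ∃ B, M✶.IsBasis B (M.E \ {e}) ∧ Disjoint I B := by
  show ((M✶ ↾ (M✶.E \ {e}))✶).Indep I ↔ _
  rw [dual_indep_iff_exists']
  simp only [restrict_ground_eq, dual_ground]
  refine and_congr_right fun _ => exists_congr fun B => and_congr_left fun _ => ?_
  exact isBase_restrict_iff (M := M✶) (X := M.E \ {e}) (by rw [dual_ground]; exact diff_subset)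

end Matroid

namespace Matroid

variable {α : Type*} {M : Matroid α} {X I B C D K A Bs : Set α} {e : α}

lemma basis_superset_subset_insert {N : Matroid α} (hB : N.IsBasis B (N.E \ {e}))
    (hBs : N.IsBase Bs) (hsub : B ⊆ Bs) : Bs ⊆ insert e B := by
  intro x hx
  by_contra hx'
  simp only [mem_insert_iff, not_or] at hx'
  have hxE : x ∈ N.E := hBs.subset_ground hx
  exact hx'.2 (hB.mem_of_insert_indep ⟨hxE, hx'.1⟩
    (hBs.indep.subset (insert_subset hx hsub)))

lemma contract_indep_nonloop [M.Finite] (he : M.Indep {e}) :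
    (M.contractSet {e}).Indep I ↔ I ⊆ M.E \ {e} ∧ M.Indep (insert e I) := by
  have heE : e ∈ M.E := he.subset_ground rfl
  rw [contract_indep_iff']
  constructor
  · rintro ⟨hIX, B, hB, hdis⟩
    refine ⟨hIX, ?_⟩
    obtain ⟨Bs, hBs, hsub⟩ := hB.indep.exists_isBase_superset
    have hBX : B ⊆ M.E \ {e} := hB.subset
    have hBsub : Bs ⊆ insert e B := basis_superset_subset_insert hB hBs hsub
    by_cases heBs : e ∈ Bs
    · exfalso
      obtain ⟨B₀, hB₀, heB₀⟩ := he.exists_isBase_superset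
      have hd₀ : M✶.IsBase (M.E \ B₀) := hB₀.compl_isBase_dual
      have hsubX : M.E \ B₀ ⊆ M.E \ {e} :=
        diff_subset_diff_right (singleton_subset_iff.2 (heB₀ rfl))
      have hbasis₀ : M✶.IsBasis (M.E \ B₀) (M.E \ {e}) :=
        hd₀.indep.isBasis_of_maximal_subset hsubX
          (fun J hJ hBJ _ => (hd₀.eq_of_subset_indep hJ hBJ).symm.subset)
          (by rw [dual_ground]; exact diff_subset)
      have h1 : B.encard = (M.E \ B₀).encard := hB.encard_eq_encard hbasis₀
      have h2 : Bs.encard = (M.E \ B₀).encard := hBs.encard_eq_encard_of_isBase hd₀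
      have hBsfin : Bs.Finite :=
        M.ground_finite.subset (by simpa using hBs.subset_ground)
      have hBBs : B = Bs :=
        hBsfin.eq_of_subset_of_encard_le' hsub (h2.trans h1.symm).le
      rw [← hBBs] at heBs
      exact (hBX heBs).2 rfl
    · have hBb : Bs = B :=
        Set.Subset.antisymm (fun x hx => ((hBsub hx).resolve_left fun h => heBs (h ▸ hx))) hsub
      have hMbase : M.IsBase (M.E \ B) := (hBb ▸ hBs).compl_isBase_of_dual
      refine hMbase.indep.subset (insert_subset ⟨heE, fun h => (hBX h).2 rfl⟩ ?_)
      exact fun x hx => ⟨(hIX hx).1, disjoint_left.mp hdis hx⟩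
  · rintro ⟨hIX, hind⟩
    refine ⟨hIX, ?_⟩
    obtain ⟨B, hB, hsub⟩ := hind.exists_isBase_superset
    have heB : e ∈ B := hsub (mem_insert _ _)
    have h1 : M.IsBasis (B ∩ {e}) {e} := by
      rw [Set.inter_eq_self_of_subset_right (singleton_subset_iff.2 heB)]
      exact he.isBasis_self
    have h2 := hB.compl_inter_isBasis_of_inter_isBasis h1
    have h3 : (M.E \ B) ∩ (M.E \ {e}) = M.E \ B :=
      inter_eq_self_of_subset_left (diff_subset_diff_right (singleton_subset_iff.2 heB))
    rw [h3] at h2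
    exact ⟨_, h2, disjoint_left.mpr fun x hxI hxB =>
      hxB.2 (hsub (mem_insert_of_mem _ hxI))⟩

lemma contract_indep_loop (heE : e ∈ M.E) (he : ¬ M.Indep {e}) :
    (M.contractSet {e}).Indep I ↔ I ⊆ M.E \ {e} ∧ M.Indep I := by
  rw [contract_indep_iff']
  constructor
  · rintro ⟨hIX, B, hB, hdis⟩
    refine ⟨hIX, ?_⟩
    obtain ⟨Bs, hBs, hsub⟩ := hB.indep.exists_isBase_superset
    have hBsub : Bs ⊆ insert e B := basis_superset_subset_insert hB hBs hsub
    have heBs : e ∈ Bs := by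
      by_contra heBs
      have hBb : Bs = B :=
        Set.Subset.antisymm (fun x hx => ((hBsub hx).resolve_left fun h => heBs (h ▸ hx))) hsub
      have hMbase : M.IsBase (M.E \ B) := (hBb ▸ hBs).compl_isBase_of_dual
      exact he (hMbase.indep.subset
        (singleton_subset_iff.2 ⟨heE, fun h => (hB.subset h).2 rfl⟩))
    have hMbase : M.IsBase (M.E \ Bs) := hBs.compl_isBase_of_dual
    refine hMbase.indep.subset fun x hx => ⟨(hIX hx).1, fun hxBs => ?_⟩
    rcases hBsub hxBs with h | h
    · exact (hIX hx).2 h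
    · exact disjoint_left.mp hdis hx h
  · rintro ⟨hIX, hind⟩
    obtain ⟨B₀, hB₀, hsub⟩ := hind.exists_isBase_superset
    have heB₀ : e ∉ B₀ := fun h => he (hB₀.indep.subset (singleton_subset_iff.2 h))
    have h1 : M.IsBasis (B₀ ∩ {e}) {e} := by
      have hBe : B₀ ∩ {e} = ∅ := by
        rw [Set.inter_singleton_eq_empty]; exact heB₀
      rw [hBe]
      refine M.empty_indep.isBasis_of_maximal_subset (empty_subset _)
        (fun J hJ _ hJX => ?_) (singleton_subset_iff.2 heE)
      rcases Set.subset_singleton_iff_eq.mp hJX with rfl | rfl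
      · exact Subset.rfl
      · exact absurd hJ he
    have h2 := hB₀.compl_inter_isBasis_of_inter_isBasis h1
    exact ⟨hIX, _, h2, disjoint_left.mpr fun x hxI hx => hx.1.2 (hsub hxI)⟩

end Matroid

namespace Matroid

variable {α : Type*} {M : Matroid α} {X I B C D K A : Set α} {e : α}

lemma ncirc_to_mcirc [M.Finite] (he : M.Indep {e}) (hK : (M.contractSet {e}).Circuit K)
    (hKi : M.Indep K) : M.Circuit (insert e K) := by
  have heE : e ∈ M.E := he.subset_ground rfl
  have hKE : K ⊆ M.E \ {e} := hK.1.2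
  have heK : e ∉ K := fun h => (hKE h).2 rfl
  constructor
  · refine ⟨fun hi => hK.1.1 ((contract_indep_nonloop he).mpr ⟨hKE, hi⟩), ?_⟩
    exact insert_subset heE (fun x hx => (hKE hx).1)
  · intro S hS
    by_cases heS : e ∈ S
    · have hSe : insert e (S \ {e}) = S := by
        rw [Set.insert_diff_singleton, Set.insert_eq_self.mpr heS]
      have hsub : S \ {e} ⊆ K := by
        intro x hx
        exact (hS.subset hx.1).resolve_left hx.2
      have hSK : S \ {e} ⊂ K := by
        refine hsub.ssubset_of_ne fun hEq => hS.ne ?_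
        rw [← hSe, hEq]
      have hi := hK.2 hSK
      rw [contract_indep_nonloop he] at hi
      rw [hSe] at hi; exact hi.2
    · exact hKi.subset fun x hx => (hS.subset hx).resolve_left fun h => heS (h ▸ hx)

lemma mcirc_to_ncirc [M.Finite] (he : M.Indep {e}) (hK : M.Circuit K) (heK : e ∈ K) :
    (M.contractSet {e}).Circuit (K \ {e}) := by
  have hKE : K ⊆ M.E := hK.1.2
  have hKe : K \ {e} ⊆ M.E \ {e} := diff_subset_diff_left hKE
  constructor
  · refine ⟨fun hi => ?_, hKe⟩
    rw [contract_indep_nonloop he] at hi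
    rw [Set.insert_diff_singleton, Set.insert_eq_self.mpr heK] at hi
    exact hK.1.1 hi.2
  · intro S hS
    rw [contract_indep_nonloop he]
    refine ⟨hS.subset.trans hKe, ?_⟩
    have heS : e ∉ S := fun h => (hS.subset h).2 rfl
    have h1 : insert e S ⊆ K := insert_subset heK fun x hx => (hS.subset hx).1
    have h2 : insert e S ≠ K := fun hEq => hS.ne (by rw [← hEq]; simp [heS])
    exact hK.2 (h1.ssubset_of_ne h2)

end Matroid

namespace Matroid

variable {α : Type*} {M : Matroid α} {X I B C D K A : Set α} {e : α} {m : ℕ}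
  {φ : α → Fin m → ZMod 2}

lemma zmod2_neg (a : ZMod 2) : -a = a := by revert a; decide

lemma zmod2_two (a : ZMod 2) : a + a = 0 := by revert a; decide

lemma fneg (v : Fin m → ZMod 2) : -v = v := funext fun i => zmod2_neg _

lemma ftwo (v : Fin m → ZMod 2) : v + v = 0 := funext fun i => zmod2_two _

lemma dep_of_sum_zero
    (hφ : ∀ I : Set α, I ⊆ M.E → (M.Indep I ↔ LinearIndependent (ZMod 2) (fun x : I => φ x)))
    (s : Finset α) (hs : ↑s ⊆ M.E) (hne : s.Nonempty)
    (h0 : ∑ x ∈ s, φ x = 0) : M.Dep ↑s := by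
  refine ⟨fun hind => ?_, hs⟩
  rw [hφ _ hs] at hind
  obtain ⟨a, ha⟩ := hne
  have := Fintype.linearIndependent_iff.mp hind (fun _ => 1) ?_ ⟨a, ha⟩
  · exact one_ne_zero this
  · simp only [one_smul]
    exact (Finset.sum_coe_sort s φ).trans h0

lemma circuit_sum_zero [M.Finite]
    (hφ : ∀ I : Set α, I ⊆ M.E → (M.Indep I ↔ LinearIndependent (ZMod 2) (fun x : I => φ x)))
    (s : Finset α) (hs : M.Circuit ↑s) : ∑ x ∈ s, φ x = 0 := by
  have hsE : ↑s ⊆ M.E := hs.1.2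
  obtain ⟨x, hx⟩ := hs.1.nonempty
  have hxs : x ∈ s := hx
  have hS₀ : (↑s \ {x} : Set α) ⊂ ↑s := by
    refine Set.diff_subset.ssubset_of_ne fun hEq => ?_
    exact ((hEq.symm ▸ hx : x ∈ (↑s \ {x} : Set α))).2 rfl
  have hindS₀ : M.Indep (↑s \ {x}) := hs.2 hS₀
  have hlin : LinearIndependent (ZMod 2) (fun y : (↑s \ {x} : Set α) => φ y) :=
    (hφ _ (Set.diff_subset.trans hsE)).mp hindS₀
  have hnl : ¬ LinearIndependent (ZMod 2) (fun y : (↑s : Set α) => φ y) :=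
    fun h => hs.1.1 ((hφ _ hsE).mpr h)
  have hins : (↑s : Set α) = insert x (↑s \ {x}) := by
    rw [Set.insert_diff_singleton, Set.insert_eq_self.mpr hx]
  rw [hins] at hnl
  change ¬ LinearIndepOn (ZMod 2) φ (insert x (↑s \ {x})) at hnl
  rw [linearIndepOn_insert (fun h => h.2 rfl)] at hnl
  have hmem : φ x ∈ Submodule.span (ZMod 2) (φ '' (↑s \ {x})) := by
    by_contra h
    exact hnl ⟨hlin, h⟩
  rw [Finsupp.mem_span_image_iff_linearCombination] at hmem
  obtain ⟨l, hl, hlc⟩ := hmem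
  have hlsupp : (↑l.support : Set α) ⊆ ↑s \ {x} := hl
  have hone : ∀ y ∈ l.support, l y = 1 := by
    intro y hy
    have h1 : l y ≠ 0 := Finsupp.mem_support_iff.mp hy
    have h2 : ∀ a : ZMod 2, a ≠ 0 → a = 1 := by decide
    exact h2 _ h1
  have hsum : ∑ y ∈ l.support, φ y = φ x := by
    rw [← hlc, Finsupp.linearCombination_apply, Finsupp.sum]
    exact (Finset.sum_congr rfl fun y hy => by rw [hone y hy, one_smul]).symm
  -- the set insert x ↑l.support is dependent, hence equals ↑s
  classical
  have hxl : x ∉ l.support := fun h => (hlsupp h).2 rfl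
  have hsub : insert x l.support ⊆ s := by
    intro y hy
    rcases Finset.mem_insert.mp hy with rfl | hy
    · exact hxs
    · exact (hlsupp hy).1
  have hdep : M.Dep ↑(insert x l.support) := by
    refine dep_of_sum_zero hφ _ ((Finset.coe_subset.mpr hsub).trans hsE)
      ⟨x, Finset.mem_insert_self _ _⟩ ?_
    rw [Finset.sum_insert hxl, hsum, ftwo]
  have hEq : insert x l.support = s := by
    by_contra hne
    have : (↑(insert x l.support) : Set α) ⊂ ↑s :=
      (Finset.coe_subset.mpr hsub).ssubset_of_ne
        (fun h => hne (Finset.coe_injective h))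
    exact hdep.1 (hs.2 this)
  rw [← hEq, Finset.sum_insert hxl, hsum, ftwo]

end Matroid


open Matroid in
theorem stmt5 {α : Type*} (M : Matroid α) [M.Finite] (hM : M.Binary) {C : Set α}
    (hC : M.Circuit C) {e : α} (heE : e ∈ M.E) (heC : e ∉ C) :
    ((M.contractSet {e}).Circuit C ∧
      ∀ D : Set α, (M.contractSet {e}).Circuit D → D ⊆ C → D = C) ∨
    (∃ C₁ C₂ : Set α, (M.contractSet {e}).Circuit C₁ ∧ (M.contractSet {e}).Circuit C₂ ∧
      Disjoint C₁ C₂ ∧ C = C₁ ∪ C₂ ∧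
      ∀ D : Set α, (M.contractSet {e}).Circuit D → D ⊆ C → D = C₁ ∨ D = C₂) := by
  classical
  obtain ⟨m, φ, hφ⟩ := hM
  have hE := M.ground_finite
  have hCE : C ⊆ M.E := hC.1.2
  have hCfin : C.Finite := hE.subset hCE
  have hCe : C ⊆ M.E \ {e} := fun x hx => ⟨hCE hx, fun h => heC (h ▸ hx)⟩
  by_cases he : M.Indep {e}
  · -- e is not a loop
    have hNdep : (M.contractSet {e}).Dep C := by
      refine ⟨fun hi => ?_, by rw [contract_ground']; exact hCe⟩
      exact hC.1.1 (((contract_indep_nonloop he).mp hi).2.subset (subset_insert _ _))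
    obtain ⟨D, hDC, hD⟩ := dep_subset_circuit hNdep hCfin
    by_cases hDCeq : D = C
    · left
      subst hDCeq
      refine ⟨hD, fun D' hD' hD'C => ?_⟩
      by_contra hne
      exact hD'.1.1 (hD.2 (hD'C.ssubset_of_ne hne))
    · right
      have hDss : D ⊂ C := hDC.ssubset_of_ne hDCeq
      have hDind : M.Indep D := hC.2 hDss
      have hK₁ : M.Circuit (insert e D) := ncirc_to_mcirc he hD hDind
      have hDfin : D.Finite := hCfin.subset hDC
      set Cf := hCfin.toFinset with hCfdef
      set Df := hDfin.toFinset with hDfdef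
      have hCfc : ↑Cf = C := hCfin.coe_toFinset
      have hDfc : ↑Df = D := hDfin.coe_toFinset
      have heD : e ∉ D := fun h => heC (hDC h)
      have heDf : e ∉ Df := fun h => heD (hDfin.mem_toFinset.mp h)
      have hDfCf : Df ⊆ Cf := fun x hx =>
        hCfin.mem_toFinset.mpr (hDC (hDfin.mem_toFinset.mp hx))
      have sumC : ∑ x ∈ Cf, φ x = 0 := circuit_sum_zero hφ Cf (by rw [hCfc]; exact hC)
      have sumK₁ : ∑ x ∈ insert e Df, φ x = 0 :=
        circuit_sum_zero hφ _ (by rw [Finset.coe_insert, hDfc]; exact hK₁)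
      have sumD : ∑ x ∈ Df, φ x = φ e := by
        rw [Finset.sum_insert heDf] at sumK₁
        have h := eq_neg_of_add_eq_zero_right sumK₁
        rwa [fneg] at h
      set Af := insert e (Cf \ Df) with hAfdef
      have heCfDf : e ∉ Cf \ Df :=
        fun h => heC (hCfin.mem_toFinset.mp (Finset.mem_sdiff.mp h).1)
      have sumA : ∑ x ∈ Af, φ x = 0 := by
        rw [hAfdef, Finset.sum_insert heCfDf, Finset.sum_sdiff_eq_sub hDfCf, sumC, zero_sub,
          fneg, sumD, ftwo]
      have hAfc : (↑Af : Set α) = insert e (C \ D) := by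
        rw [hAfdef, Finset.coe_insert, Finset.coe_sdiff, hCfc, hDfc]
      have hAE : ↑Af ⊆ M.E := by
        rw [hAfc]; exact insert_subset heE (fun x hx => hCE hx.1)
      have hAdep : M.Dep ↑Af :=
        dep_of_sum_zero hφ Af hAE ⟨e, Finset.mem_insert_self _ _⟩ sumA
      obtain ⟨K₂, hK₂A, hK₂⟩ := dep_subset_circuit hAdep (Af.finite_toSet)
      have hDne : D.Nonempty := hD.1.nonempty
      have hCDss : C \ D ⊂ C := by
        refine diff_subset.ssubset_of_ne fun hEq => ?_
        obtain ⟨d, hd⟩ := hDne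
        have : d ∈ C \ D := hEq.symm ▸ hDC hd
        exact this.2 hd
      have heK₂ : e ∈ K₂ := by
        by_contra heK₂
        have hsub : K₂ ⊆ C \ D := by
          intro x hx
          have := hK₂A hx
          rw [hAfc] at this
          exact this.resolve_left fun h => heK₂ (h ▸ hx)
        exact hK₂.1.1 (hC.2 (hsub.trans_ssubset hCDss))
      have hK₂fin : K₂.Finite := Af.finite_toSet.subset hK₂A
      set K₂f := hK₂fin.toFinset with hK₂fdef
      have hK₂fc : ↑K₂f = K₂ := hK₂fin.coe_toFinset
      have hK₂sub : K₂f ⊆ Af := fun x hx => hK₂A (hK₂fin.mem_toFinset.mp hx)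
      have sumK₂ : ∑ x ∈ K₂f, φ x = 0 :=
        circuit_sum_zero hφ _ (by rw [hK₂fc]; exact hK₂)
      have sumB : ∑ x ∈ Af \ K₂f, φ x = 0 := by
        rw [Finset.sum_sdiff_eq_sub hK₂sub, sumA, sumK₂, sub_zero]
      have hBempty : Af \ K₂f = ∅ := by
        by_contra hne
        obtain ⟨b, hb⟩ := Finset.nonempty_of_ne_empty hne
        have hBsub : (↑(Af \ K₂f) : Set α) ⊆ C \ D := by
          intro x hx
          have hx' := Finset.mem_sdiff.mp hx
          have hxA : (x : α) ∈ (↑Af : Set α) := hx'.1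
          rw [hAfc] at hxA
          rcases hxA with rfl | h
          · exact absurd (hK₂fin.mem_toFinset.mpr heK₂) hx'.2
          · exact h
        have hBdep : M.Dep ↑(Af \ K₂f) :=
          dep_of_sum_zero hφ _ (hBsub.trans (diff_subset.trans hCE)) ⟨b, hb⟩ sumB
        obtain ⟨K₃, hK₃sub, hK₃⟩ := dep_subset_circuit hBdep (Finset.finite_toSet _)
        exact hK₃.1.1 (hC.2 ((hK₃sub.trans hBsub).trans_ssubset hCDss))
      have hAfK : (↑Af : Set α) = K₂ := by
        refine Subset.antisymm (fun x hx => ?_) hK₂A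
        have hxf : x ∈ Af := hx
        have hxK : x ∈ K₂f := by
          by_contra h
          exact (Finset.eq_empty_iff_forall_notMem.mp hBempty x)
            (Finset.mem_sdiff.mpr ⟨hxf, h⟩)
        exact hK₂fin.mem_toFinset.mp hxK
      have hK₂' : M.Circuit (insert e (C \ D)) := by rw [← hAfc, hAfK]; exact hK₂
      have hC₂ : (M.contractSet {e}).Circuit (C \ D) := by
        have h := mcirc_to_ncirc he hK₂' (mem_insert _ _)
        rwa [Set.insert_diff_self_of_notMem (fun h => heC h.1 : e ∉ C \ D)] at h
      refine ⟨D, C \ D, hD, hC₂, disjoint_sdiff_right, (union_diff_cancel hDC).symm, ?_⟩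
      intro D' hD' hD'C
      by_cases hD'Ceq : D' = C
      · exfalso
        subst hD'Ceq
        exact hD.1.1 (hD'.2 hDss)
      have hD'ss : D' ⊂ C := hD'C.ssubset_of_ne hD'Ceq
      have hD'ind : M.Indep D' := hC.2 hD'ss
      have hK' : M.Circuit (insert e D') := ncirc_to_mcirc he hD' hD'ind
      by_cases hDD' : D' = D
      · exact Or.inl hDD'
      refine Or.inr ?_
      have hD'fin : D'.Finite := hCfin.subset hD'C
      set D'f := hD'fin.toFinset with hD'fdef
      have hD'fc : ↑D'f = D' := hD'fin.coe_toFinset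
      have heD' : e ∉ D' := fun h => heC (hD'C h)
      have heD'f : e ∉ D'f := fun h => heD' (hD'fin.mem_toFinset.mp h)
      have sumK' : ∑ x ∈ insert e D'f, φ x = 0 :=
        circuit_sum_zero hφ _ (by rw [Finset.coe_insert, hD'fc]; exact hK')
      have sumD' : ∑ x ∈ D'f, φ x = φ e := by
        rw [Finset.sum_insert heD'f] at sumK'
        have h := eq_neg_of_add_eq_zero_right sumK'
        rwa [fneg] at h
      set Sf := (D'f \ Df) ∪ (Df \ D'f) with hSfdef
      have sumS : ∑ x ∈ Sf, φ x = 0 := by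
        have e1 : ∑ x ∈ D'f \ Df, φ x = ∑ x ∈ D'f, φ x - ∑ x ∈ D'f ∩ Df, φ x := by
          rw [← Finset.sdiff_inter_self_left D'f Df]
          exact Finset.sum_sdiff_eq_sub Finset.inter_subset_left
        have e2 : ∑ x ∈ Df \ D'f, φ x = ∑ x ∈ Df, φ x - ∑ x ∈ D'f ∩ Df, φ x := by
          rw [← Finset.sdiff_inter_self_left Df D'f, Finset.inter_comm Df D'f]
          exact Finset.sum_sdiff_eq_sub Finset.inter_subset_right
        rw [hSfdef, Finset.sum_union disjoint_sdiff_sdiff, e1, e2, sumD, sumD',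
          sub_add_sub_comm, ftwo, ftwo, sub_zero]
      have hSne : Sf.Nonempty := by
        rw [Finset.nonempty_iff_ne_empty]
        intro h
        rw [hSfdef, Finset.union_eq_empty] at h
        have hEq : D'f = Df :=
          Finset.Subset.antisymm (Finset.sdiff_eq_empty_iff_subset.mp h.1)
            (Finset.sdiff_eq_empty_iff_subset.mp h.2)
        apply hDD'
        rw [← hD'fc, hEq, hDfc]
      have hSsubC : (↑Sf : Set α) ⊆ C := by
        intro x hx
        rcases Finset.mem_union.mp hx with h | h
        · exact hD'C (hD'fin.mem_toFinset.mp (Finset.mem_sdiff.mp h).1)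
        · exact hDC (hDfin.mem_toFinset.mp (Finset.mem_sdiff.mp h).1)
      have hSdep : M.Dep ↑Sf := dep_of_sum_zero hφ Sf (hSsubC.trans hCE) hSne sumS
      obtain ⟨K₃, hK₃S, hK₃⟩ := dep_subset_circuit hSdep (Finset.finite_toSet _)
      have hK₃C : K₃ = C := by
        by_contra h
        exact hK₃.1.1 (hC.2 ((hK₃S.trans hSsubC).ssubset_of_ne h))
      have hCsubS : C ⊆ ↑Sf := hK₃C ▸ hK₃S
      have hSset : (↑Sf : Set α) = (D' \ D) ∪ (D \ D') := by
        rw [hSfdef, Finset.coe_union, Finset.coe_sdiff, Finset.coe_sdiff, hDfc, hD'fc]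
      refine Subset.antisymm (fun x hxD' => ?_) (fun x hx => ?_)
      · refine ⟨hD'C hxD', fun hxD => ?_⟩
        have hs := hCsubS (hD'C hxD')
        rw [hSset] at hs
        rcases hs with h | h
        · exact h.2 hxD
        · exact h.2 hxD'
      · have hs := hCsubS hx.1
        rw [hSset] at hs
        rcases hs with h | h
        · exact h.1
        · exact absurd h.1 hx.2
  · -- e is a loop
    left
    have hCcirc : (M.contractSet {e}).Circuit C := by
      refine ⟨⟨fun hi => hC.1.1 ((contract_indep_loop heE he).mp hi).2,
        by rw [contract_ground']; exact hCe⟩, fun D hD => ?_⟩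
      exact (contract_indep_loop heE he).mpr ⟨hD.subset.trans hCe, hC.2 hD⟩
    refine ⟨hCcirc, fun D hD hDC => ?_⟩
    by_contra hne
    have hss : D ⊂ C := hDC.ssubset_of_ne hne
    exact hD.1.1 ((contract_indep_loop heE he).mpr ⟨hss.subset.trans hCe, hC.2 hss⟩)
end

section
/- Let M be a matroid with a cocircuit {e,f}, and let M' = M/e be the series contraction. Then the cycles of M' are exactly the sets C \ {e} where C is a cycle of M, and a cycle C of M contains e if and only if it contains f. -/
open Set

namespace Matroid

variable {α : Type*}

/-- Deletion of a set of elements. -/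
def delete' (M : Matroid α) (D : Set α) : Matroid α := M ↾ (M.E \ D)

/-- Contraction of a set of elements. -/
def contract' (M : Matroid α) (C : Set α) : Matroid α := (M✶.delete' C)✶

end Matroid

section Aux

open Matroid

variable {α : Type*} {M : Matroid α} {e f : α}

lemma pair_ssubset_right {x y : α} (hxy : x ≠ y) : ({y} : Set α) ⊂ {x, y} := by
  constructor
  · intro z hz; simp at hz; simp [hz]
  · intro hsub
    have := hsub (show x ∈ ({x, y} : Set α) by simp)
    simp at this
    exact hxy this

lemma span_aux {x y : α} (hxy : x ≠ y) (hc : M✶.Circuit {x, y}) :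
    x ∉ M.closure (M.E \ {x, y}) := by
  intro hx
  have hxE : x ∈ M.E := hc.1.2 (by simp)
  have hyE : y ∈ M.E := hc.1.2 (by simp)
  have hyi : M✶.Indep {y} := hc.2 (pair_ssubset_right hxy)
  have hsp : M.Spanning (M.E \ {y}) := (coindep_def.mpr hyi).compl_spanning
  have hins : M.E \ {y} = insert x (M.E \ {x, y}) := by
    ext z
    simp only [mem_diff, mem_singleton_iff, mem_insert_iff]
    constructor
    · rintro ⟨hzE, hzy⟩
      by_cases hzx : z = x
      · exact Or.inl hzx
      · exact Or.inr ⟨hzE, by simp [hzx, hzy]⟩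
    · rintro (rfl | ⟨hzE, hz⟩)
      · exact ⟨hxE, hxy⟩
      · exact ⟨hzE, fun h => hz (Or.inr h)⟩
  have h1 : M.closure (insert x (M.E \ {x, y})) = M.closure (M.E \ {x, y}) :=
    closure_insert_eq_of_mem_closure hx
  have h2 : M.closure (M.E \ {x, y}) = M.E := by
    rw [← h1, ← hins, (spanning_iff_closure_eq diff_subset).mp hsp]
  have hsp2 : M.Spanning (M.E \ {x, y}) := (spanning_iff_closure_eq diff_subset).mpr h2
  have hco2 := (spanning_iff_compl_coindep diff_subset).mp hsp2
  rw [Set.diff_diff_cancel_left (show {x, y} ⊆ M.E from insert_subset hxE (by simpa))] at hco2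
  exact hc.1.1 hco2

lemma ser_aux {x y : α} {C : Set α} (hxy : x ≠ y) (hc : M✶.Circuit {x, y})
    (hC : M.Circuit C) (hxC : x ∈ C) : y ∈ C := by
  by_contra hyC
  have hCE : C ⊆ M.E := hC.1.2
  have hI : M.Indep (C \ {x}) := hC.2 (Set.sdiff_singleton_ssubset.mpr hxC)
  have hdep : M.Dep (insert x (C \ {x})) := by
    rw [Set.insert_diff_singleton, Set.insert_eq_self.mpr hxC]; exact hC.1
  have hx : x ∈ M.closure (C \ {x}) := ((hI.insert_dep_iff).mp hdep).1
  have hsub : C \ {x} ⊆ M.E \ {x, y} := by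
    rintro z ⟨hzC, hzx⟩
    refine ⟨hCE hzC, ?_⟩
    simp only [mem_insert_iff, mem_singleton_iff]
    rintro (rfl | rfl)
    · exact hzx rfl
    · exact hyC hzC
  exact span_aux hxy hc (M.closure_subset_closure hsub hx)

lemma contract_eq_aux (M : Matroid α) (e : α) :
    M.contract' {e} = (M✶ ↾ (M.E \ {e}))✶ := rfl

lemma contract_ground_aux (M : Matroid α) (e : α) :
    (M.contract' {e}).E = M.E \ {e} := rfl

lemma key_aux (hef : e ≠ f) (hc : M✶.Circuit {e, f}) (I : Set α) :
    (M.contract' {e}).Indep I ↔ e ∉ I ∧ M.Indep (insert e I) := by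
  have heE : e ∈ M.E := hc.1.2 (by simp)
  have hfE : f ∈ M.E := hc.1.2 (by simp)
  rw [contract_eq_aux, dual_indep_iff_exists']
  constructor
  · rintro ⟨hIE, B, hB, hdisj⟩
    have hIE' : I ⊆ M.E \ {e} := hIE
    have heI : e ∉ I := fun h => (hIE' h).2 rfl
    refine ⟨heI, ?_⟩
    obtain ⟨hBi, hBR⟩ := restrict_indep_iff.mp hB.indep
    obtain ⟨B', hB', hBB'⟩ := hBi.exists_isBase_superset
    have heB : e ∉ B := fun h => (hBR h).2 rfl
    by_cases heB' : e ∈ B'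
    · exfalso
      by_cases hfB : f ∈ B
      · exact hc.1.1 (hB'.indep.subset (insert_subset heB'
          (singleton_subset_iff.mpr (hBB' hfB))))
      · have hfR : f ∈ (M✶ ↾ (M.E \ {e})).E \ B :=
          ⟨⟨hfE, by simp [Ne.symm hef]⟩, hfB⟩
        have hdepfB := hB.insert_dep hfR
        rw [restrict_dep_iff] at hdepfB
        have hdep2 : M✶.Dep (insert f B) :=
          ⟨hdepfB.1, insert_subset hfE (hBR.trans diff_subset)⟩
        have hfcl : f ∈ M✶.closure B := ((hBi.insert_dep_iff).mp hdep2).1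
        have hfi : M✶.Indep {f} := hc.2 (pair_ssubset_right hef)
        have hecl : e ∈ M✶.closure {f} := ((hfi.insert_dep_iff).mp hc.1).1
        have hecl2 : e ∈ M✶.closure B :=
          M✶.closure_subset_closure_of_subset_closure
            (singleton_subset_iff.mpr hfcl) hecl
        have hdepe : M✶.Dep (insert e B) := (hBi.insert_dep_iff).mpr ⟨hecl2, heB⟩
        exact hdepe.1 (hB'.indep.subset (insert_subset heB' hBB'))
    · have hBeq : B = B' ∩ (M.E \ {e}) := hB.eq_of_subset_indep
        (restrict_indep_iff.mpr ⟨hB'.indep.subset inter_subset_left, inter_subset_right⟩)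
        (subset_inter hBB' hBR)
      have hB'B : B' = B := by
        refine subset_antisymm (fun z hz => ?_) hBB'
        rw [hBeq]
        exact ⟨hz, hB'.indep.subset_ground hz, fun h => heB' (h ▸ hz)⟩
      have hMB : M.IsBase (M.E \ B) := (hB'B ▸ hB').compl_isBase_of_dual
      refine hMB.indep.subset ?_
      rintro z (rfl | hz)
      · exact ⟨heE, heB⟩
      · exact ⟨(hIE' hz).1, fun hzB => (disjoint_left.mp hdisj hz) hzB⟩
  · rintro ⟨heI, hInd⟩
    obtain ⟨B₀, hB₀, hsub⟩ := hInd.exists_isBase_superset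
    have hIE : I ⊆ M.E \ {e} := fun z hz =>
      ⟨hInd.subset_ground (mem_insert_of_mem _ hz), fun h => heI ((mem_singleton_iff.mp h) ▸ hz)⟩
    have hdB : M✶.IsBase (M.E \ B₀) := hB₀.compl_isBase_dual
    have hBR : M.E \ B₀ ⊆ M.E \ {e} :=
      diff_subset_diff_right (singleton_subset_iff.mpr (hsub (mem_insert e I)))
    refine ⟨hIE, M.E \ B₀, ?_, ?_⟩
    · refine (restrict_indep_iff.mpr ⟨hdB.indep, hBR⟩).isBase_of_maximal ?_
      intro J hJ hBJ
      exact hdB.eq_of_subset_indep (restrict_indep_iff.mp hJ).1 hBJ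
    · exact disjoint_left.mpr fun z hz hz2 => hz2.2 (hsub (mem_insert_of_mem _ hz))

lemma dep_aux (hef : e ≠ f) (hc : M✶.Circuit {e, f}) (D : Set α) :
    (M.contract' {e}).Dep D ↔ D ⊆ M.E \ {e} ∧ M.Dep (insert e D) := by
  have heE : e ∈ M.E := hc.1.2 (by simp)
  constructor
  · rintro ⟨hnI, hDE⟩
    have hDE' : D ⊆ M.E \ {e} := hDE
    refine ⟨hDE', ?_, insert_subset heE (hDE'.trans diff_subset)⟩
    intro hI
    exact hnI ((key_aux hef hc D).mpr ⟨fun h => (hDE' h).2 rfl, hI⟩)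
  · rintro ⟨hDE, hdep⟩
    exact ⟨fun hI => hdep.1 ((key_aux hef hc D).mp hI).2, hDE⟩

lemma circ_aux (hef : e ≠ f) (hc : M✶.Circuit {e, f}) (C' : Set α) :
    (M.contract' {e}).Circuit C' ↔ ∃ C, M.Circuit C ∧ C' = C \ {e} := by
  have heE : e ∈ M.E := hc.1.2 (by simp)
  constructor
  · rintro ⟨hdep, hmin⟩
    obtain ⟨hC'E, hdepM⟩ := (dep_aux hef hc C').mp hdep
    have heC' : e ∉ C' := fun h => (hC'E h).2 rfl
    by_cases hCi : M.Indep C'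
    · refine ⟨insert e C', ⟨hdepM, ?_⟩, by simp [heC']⟩
      intro D hD
      by_cases heD : e ∈ D
      · have hsub1 : D \ {e} ⊆ C' := by
          rintro z ⟨hz, hze⟩
          rcases hD.subset hz with rfl | hzC
          · exact absurd rfl hze
          · exact hzC
        have hD0 : D \ {e} ⊂ C' := by
          obtain ⟨w, hw, hwD⟩ := exists_of_ssubset hD
          have hwe : w ≠ e := fun hh => hwD (hh ▸ heD)
          have hwC : w ∈ C' := by
            rcases hw with rfl | hw
            · exact absurd rfl hwe
            · exact hw
          rw [Set.ssubset_iff_of_subset hsub1]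
          exact ⟨w, hwC, fun hm => hwD hm.1⟩
        obtain ⟨-, h2⟩ := (key_aux hef hc (D \ {e})).mp (hmin hD0)
        rwa [Set.insert_diff_singleton, Set.insert_eq_self.mpr heD] at h2
      · refine hCi.subset ?_
        intro z hz
        rcases hD.subset hz with rfl | h
        · exact absurd hz heD
        · exact h
    · refine ⟨C', ⟨⟨hCi, hC'E.trans diff_subset⟩, ?_⟩, by simp [heC']⟩
      intro D hD
      exact (((key_aux hef hc D).mp (hmin hD)).2).subset (subset_insert e D)
  · rintro ⟨C, hC, rfl⟩
    have hCE : C ⊆ M.E := hC.1.2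
    by_cases heC : e ∈ C
    · have hfC : f ∈ C := ser_aux hef hc hC heC
      constructor
      · refine (dep_aux hef hc _).mpr ⟨diff_subset_diff_left hCE, ?_⟩
        rw [Set.insert_diff_singleton, Set.insert_eq_self.mpr heC]; exact hC.1
      · intro D hD
        have heD : e ∉ D := fun hh => (hD.subset hh).2 rfl
        refine (key_aux hef hc D).mpr ⟨heD, hC.2 ?_⟩
        have hsubset : insert e D ⊆ C := by
          rintro z (rfl | hz)
          · exact heC
          · exact (hD.subset hz).1
        obtain ⟨w, hw, hwD⟩ := exists_of_ssubset hD
        rw [Set.ssubset_iff_of_subset hsubset]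
        refine ⟨w, hw.1, ?_⟩
        rintro (rfl | hm)
        · exact hw.2 rfl
        · exact hwD hm
    · have hfC : f ∉ C := fun hf =>
        heC (ser_aux (Ne.symm hef) (by rwa [Set.pair_comm] at hc) hC hf)
      have hCe : C \ {e} = C := by
        exact Set.diff_singleton_eq_self heC
      rw [hCe]
      constructor
      · refine (dep_aux hef hc _).mpr
          ⟨fun z hz => ⟨hCE hz, fun h => heC ((mem_singleton_iff.mp h) ▸ hz)⟩, ?_⟩
        exact hC.1.superset (subset_insert e C) (insert_subset heE hCE)
      · intro D hD
        have hDi : M.Indep D := hC.2 hD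
        have heD : e ∉ D := fun h => heC (hD.1 h)
        refine (key_aux hef hc D).mpr ⟨heD, ?_⟩
        by_contra hcon
        have hdepD : M.Dep (insert e D) :=
          ⟨hcon, insert_subset heE ((hD.1.trans hCE))⟩
        have hecl : e ∈ M.closure D := ((hDi.insert_dep_iff).mp hdepD).1
        refine span_aux hef hc (M.closure_subset_closure ?_ hecl)
        intro z hz
        refine ⟨hCE (hD.1 hz), ?_⟩
        simp only [mem_insert_iff, mem_singleton_iff]
        rintro (rfl | rfl)
        · exact heD hz
        · exact hfC (hD.1 hz)

end Aux

theorem stmt11 {α : Type*} (M : Matroid α) {e f : α} (hef : e ≠ f)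
    (h : M.Cocircuit {e, f}) :
    (∀ A : Set α, (M.contract' {e}).Cycle A ↔ ∃ C : Set α, M.Cycle C ∧ A = C \ {e}) ∧
    (∀ C : Set α, M.Cycle C → (e ∈ C ↔ f ∈ C)) := by
  have hc : M✶.Circuit {e, f} := h
  constructor
  · intro A
    constructor
    · rintro ⟨𝒞', h𝒞', hpd, rfl⟩
      have hlift : ∀ C' : Set α, ∃ C, C' ∈ 𝒞' →
          (M.Circuit C ∧ C' = C \ {e}) := by
        intro C'
        by_cases hmem : C' ∈ 𝒞'
        · obtain ⟨C, hC, hCe⟩ := (circ_aux hef hc C').mp (h𝒞' C' hmem)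
          exact ⟨C, fun _ => ⟨hC, hCe⟩⟩
        · exact ⟨∅, fun hm => absurd hm hmem⟩
      choose L hL using hlift
      refine ⟨⋃₀ (L '' 𝒞'), ⟨L '' 𝒞', ?_, ?_, rfl⟩, ?_⟩
      · rintro C ⟨C', hC', rfl⟩
        exact (hL C' hC').1
      · rintro C1 ⟨C1', h1, rfl⟩ C2 ⟨C2', h2, rfl⟩ hne
        have hne' : C1' ≠ C2' := fun hh => hne (by rw [hh])
        have hd : Disjoint C1' C2' := hpd h1 h2 hne'
        rw [(hL C1' h1).2, (hL C2' h2).2] at hd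
        simp only [Function.onFun, id]
        rw [disjoint_left]
        intro z hz1 hz2
        rcases eq_or_ne z e with rfl | hze
        · have hf1 : f ∈ L C1' := ser_aux hef hc (hL C1' h1).1 hz1
          have hf2 : f ∈ L C2' := ser_aux hef hc (hL C2' h2).1 hz2
          exact disjoint_left.mp hd ⟨hf1, Ne.symm hef⟩ ⟨hf2, Ne.symm hef⟩
        · exact disjoint_left.mp hd ⟨hz1, hze⟩ ⟨hz2, hze⟩
      · have : (⋃₀ (L '' 𝒞')) \ {e} = ⋃ C' ∈ 𝒞', (L C' \ {e}) := by
          rw [sUnion_image]; simp only [iUnion_diff]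
        rw [this, sUnion_eq_biUnion]
        exact iUnion₂_congr fun C' hC' => (hL C' hC').2
    · rintro ⟨C, ⟨𝒞, h𝒞, hpd, rfl⟩, rfl⟩
      refine ⟨(fun D => D \ {e}) '' 𝒞, ?_, ?_, ?_⟩
      · rintro C' ⟨D, hD, rfl⟩
        exact (circ_aux hef hc _).mpr ⟨D, h𝒞 D hD, rfl⟩
      · rintro C1 ⟨D1, h1, rfl⟩ C2 ⟨D2, h2, rfl⟩ hne
        have hne' : D1 ≠ D2 := fun hh => hne (by rw [hh])
        exact (hpd h1 h2 hne').mono diff_subset diff_subset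
      · rw [sUnion_image, sUnion_eq_biUnion]
        simp only [iUnion_diff]
  · rintro C ⟨𝒞, h𝒞, hpd, rfl⟩
    constructor
    · rintro ⟨D, hD, heD⟩
      exact ⟨D, hD, ser_aux hef hc (h𝒞 D hD) heD⟩
    · rintro ⟨D, hD, hfD⟩
      exact ⟨D, hD, ser_aux (Ne.symm hef) (by rwa [Set.pair_comm] at hc) (h𝒞 D hD) hfD⟩
end

section
/- Let M be a matroid with a cocircuit {e,f}, and let C be a circuit of M containing e. Then C \ {e} is a circuit of M/e, and moreover C \ {e} is not contained in any circuit of M other than C. -/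
open Set

namespace Matroid

variable {α : Type*}

theorem circ_cocirc_aux {M : Matroid α} {C K : Set α} (hC : M.Circuit C)
    (hK : M✶.Circuit K) {x : α} (hx : C ∩ K = {x}) : False := by
  have hxCK : x ∈ C ∩ K := hx ▸ rfl
  have hKx : M✶.Indep (K \ {x}) :=
    hK.2 (sdiff_singleton_ssubset.2 hxCK.2)
  obtain ⟨-, B, hB, hdisj⟩ := (dual_indep_iff_exists').1 hKx
  have hCx : M.Indep (C \ {x}) := hC.2 (sdiff_singleton_ssubset.2 hxCK.1)
  obtain ⟨B', hB', hCB', hB'sub⟩ := hCx.exists_isBase_subset_union_isBase hB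
  obtain ⟨y, hyK, hyB'⟩ := ((dual_dep_iff_forall.1 hK.1).1 B' hB')
  have hyx : y = x := by
    rcases hB'sub hyB' with hy | hy
    · have : y ∈ C ∩ K := ⟨hy.1, hyK⟩
      rw [hx] at this; exact this
    · by_contra hne
      exact hdisj.ne_of_mem ⟨hyK, hne⟩ hy rfl
  have hCB : C ⊆ B' := by
    intro z hz
    rcases eq_or_ne z x with rfl | hzx
    · exact hyx ▸ hyB'
    · exact hCB' ⟨hz, hzx⟩
  exact hC.1.1 (hB'.indep.subset hCB)

/-- Independence in the contraction of a nonloop element. -/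
theorem contract_indep_iff'_s12 {M : Matroid α} {e : α} (he : e ∈ M.E)
    (hne : M.Indep {e}) {I : Set α} (hI : I ⊆ M.E \ {e}) :
    (M.contract' {e}).Indep I ↔ M.Indep (insert e I) := by
  have hground : (M✶.delete' {e}).E = M.E \ {e} := rfl
  rw [Matroid.contract', dual_indep_iff_exists' ]
  unfold Matroid.delete'
  constructor
  · rintro ⟨-, B, hB, hdisj⟩
    -- B is a base of M✶ ↾ (M.E \ {e})
    have hBbasis : M✶.IsBasis B (M.E \ {e}) :=
      (isBasis'_iff_isBasis diff_subset).1 (isBase_restrict_iff'.1 hB)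
    -- there is a base of M✶ inside M.E \ {e}
    obtain ⟨B₁, hB₁, heB₁⟩ := hne.exists_isBase_superset
    have hB₀ : M✶.IsBase (M.E \ B₁) := hB₁.compl_isBase_dual
    have hB₀sub : M.E \ B₁ ⊆ M.E \ {e} :=
      diff_subset_diff_right (singleton_subset_iff.2 (heB₁ rfl))
    have hBbase : M✶.IsBase B := hBbasis.isBase_of_isBase_subset hB₀ hB₀sub
    have hcompl : M.IsBase (M.E \ B) := hBbase.compl_isBase_of_dual
    refine hcompl.indep.subset ?_
    rintro z (rfl | hz)
    · exact ⟨he, fun hzB => (hBbasis.subset hzB).2 rfl⟩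
    · exact ⟨(hI hz).1, fun hzB => hdisj.ne_of_mem hz hzB rfl⟩
  · intro hind
    obtain ⟨B₁, hB₁, hsub⟩ := hind.exists_isBase_superset
    have hB₀ : M✶.IsBase (M.E \ B₁) := hB₁.compl_isBase_dual
    have hB₀sub : M.E \ B₁ ⊆ M.E \ {e} :=
      diff_subset_diff_right (singleton_subset_iff.2 (hsub (mem_insert e I)))
    refine ⟨hI, M.E \ B₁, ?_, ?_⟩
    · rw [isBase_restrict_iff']
      exact (isBasis'_iff_isBasis diff_subset).2 (hB₀.isBasis_of_subset (diff_subset) hB₀sub)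
    · exact disjoint_left.2 fun z hz hz' => hz'.2 (hsub (mem_insert_of_mem e hz))

end Matroid



theorem stmt12 {α : Type*} (M : Matroid α) {e f : α} (hef : e ≠ f)
    (h : M.Cocircuit {e, f}) {C : Set α} (hC : M.Circuit C) (heC : e ∈ C) :
    (M.contract' {e}).Circuit (C \ {e}) ∧
    ∀ D : Set α, M.Circuit D → C \ {e} ⊆ D → D = C := by
  have hKE : ({e, f} : Set α) ⊆ M.E := h.1.subset_ground
  have heE : e ∈ M.E := hKE (by simp)
  -- f ∈ C
  have hfC : f ∈ C := by
    by_contra hfC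
    refine Matroid.circ_cocirc_aux hC h (x := e) ?_
    apply Set.eq_singleton_iff_unique_mem.2
    refine ⟨⟨heC, by simp⟩, ?_⟩
    rintro y ⟨hyC, rfl | rfl⟩
    · rfl
    · exact absurd hyC hfC
  -- e is a nonloop
  have hne : M.Indep {e} :=
    hC.2 ⟨Set.singleton_subset_iff.2 heC, fun hs => hef (hs hfC).symm⟩
  have hCE : C ⊆ M.E := hC.1.subset_ground
  have hCe_sub : C \ {e} ⊆ M.E \ {e} := Set.diff_subset_diff_left hCE
  have hinsC : insert e (C \ {e}) = C := Set.insert_diff_singleton.trans (by simp [heC])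
  constructor
  · constructor
    · rw [Matroid.dep_iff]
      refine ⟨fun hind => ?_, hCe_sub⟩
      rw [Matroid.contract_indep_iff'_s12 heE hne hCe_sub, hinsC] at hind
      exact hC.1.1 hind
    · intro D hD
      have hDsub : D ⊆ M.E \ {e} := hD.subset.trans hCe_sub
      rw [Matroid.contract_indep_iff'_s12 heE hne hDsub]
      refine hC.2 ?_
      obtain ⟨x, hxCe, hxD⟩ := exists_of_ssubset hD
      constructor
      · exact Set.insert_subset heC (hD.subset.trans diff_subset)
      · intro hCsub
        rcases hCsub hxCe.1 with rfl | hx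
        · exact hxCe.2 rfl
        · exact hxD hx
  · intro D hD hCD
    by_cases heD : e ∈ D
    · have hCsub : C ⊆ D := by
        rw [← hinsC]; exact Set.insert_subset heD hCD
      by_contra hne'
      exact hC.1.1 (hD.2 ⟨hCsub, fun hDC => hne' (Set.Subset.antisymm hDC hCsub)⟩)
    · exfalso
      refine Matroid.circ_cocirc_aux hD h (x := f) ?_
      apply Set.eq_singleton_iff_unique_mem.2
      refine ⟨⟨hCD ⟨hfC, hef.symm⟩, by simp⟩, ?_⟩
      rintro y ⟨hyD, rfl | rfl⟩
      · exact absurd hyD heD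
      · rfl
end
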